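/- For every p ∈ (0,1) and every j ∈ ℕ₊, (1/p − 1)·Σ_{k=j}^∞ B(1+1/p, k+1)·(1/j) = (1−p)·B(1+1/p, j). -/

import Mathlib

/-- The Beta function `B(x,y) = Γ(x)Γ(y)/Γ(x+y)`. -/
noncomputable def betaFn (x y : ℝ) : ℝ := Real.Gamma x * Real.Gamma y / Real.Gamma (x + y)

/-!
The quantity `y B(x, y)` telescopes: consecutive values along `y, y + 1, y + 2, …` differ by
`(x - 1) B(x, y + 1)`. For `x ≥ 2` the products `(y + 1) y B(x, y)` decrease along that
progression, so `y B(x, y)` tends to `0` and the tail series sums to `y B(x, y) / (x - 1)`;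
with `x = 1 + 1/p` this is `p j B(x, j)`.
-/

open Filter Topology Finset

lemma betaFn_pos {x y : ℝ} (hx : 0 < x) (hy : 0 < y) : 0 < betaFn x y :=
  div_pos (mul_pos (Real.Gamma_pos_of_pos hx) (Real.Gamma_pos_of_pos hy))
    (Real.Gamma_pos_of_pos (add_pos hx hy))

lemma betaFn_add_one {x y : ℝ} (hy : y ≠ 0) (hxy : 0 < x + y) :
    betaFn x (y + 1) = y / (x + y) * betaFn x y := by
  have hΓ : Real.Gamma (x + y) ≠ 0 := (Real.Gamma_pos_of_pos hxy).ne'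
  rw [betaFn, betaFn, ← add_assoc, Real.Gamma_add_one hy, Real.Gamma_add_one hxy.ne']
  field_simp

lemma mul_betaFn_sub_mul_betaFn_add_one {x y : ℝ} (hy : y ≠ 0) (hxy : 0 < x + y) :
    y * betaFn x y - (y + 1) * betaFn x (y + 1) = (x - 1) * betaFn x (y + 1) := by
  rw [betaFn_add_one hy hxy]
  field_simp
  ring

lemma mul_betaFn_add_one_le {x y : ℝ} (hx : 2 ≤ x) (hy : 0 < y) :
    (y + 2) * ((y + 1) * betaFn x (y + 1)) ≤ (y + 1) * (y * betaFn x y) := by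
  have hxy : 0 < x + y := by linarith
  have hB := betaFn_pos (x := x) (by linarith) hy
  rw [betaFn_add_one hy.ne' hxy, ← sub_nonneg]
  have key : (y + 1) * (y * betaFn x y) - (y + 2) * ((y + 1) * (y / (x + y) * betaFn x y))
      = (x - 2) * ((y + 1) * y * betaFn x y / (x + y)) := by
    field_simp; ring
  rw [key]
  exact mul_nonneg (by linarith) (div_nonneg (mul_nonneg (by positivity) hB.le) hxy.le)

lemma tendsto_mul_betaFn_add_nat {x y : ℝ} (hx : 2 ≤ x) (hy : 0 < y) :
    Tendsto (fun n : ℕ => (y + n) * betaFn x (y + n)) atTop (𝓝 0) := by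
  set u : ℕ → ℝ := fun n => (y + n) * betaFn x (y + n)
  have hu_nonneg : ∀ n, 0 ≤ u n := fun n =>
    (mul_pos (by positivity) (betaFn_pos (by linarith) (by positivity))).le
  have hanti : Antitone fun n : ℕ => (y + n + 1) * u n := by
    refine antitone_nat_of_succ_le fun n => ?_
    have := mul_betaFn_add_one_le hx (y := y + n) (by positivity)
    simp only [u, Nat.cast_succ, ← add_assoc]
    linarith
  have hbound : ∀ n : ℕ, u n ≤ (y + 1) * u 0 / (y + n + 1) := fun n => by
    rw [le_div_iff₀ (by positivity), mul_comm]
    simpa using hanti (Nat.zero_le n)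
  refine squeeze_zero hu_nonneg hbound (tendsto_const_nhds.div_atTop ?_)
  exact tendsto_atTop_add_const_right _ _
    (tendsto_atTop_add_const_left _ _ tendsto_natCast_atTop_atTop)

lemma hasSum_betaFn_add_nat {x y : ℝ} (hx : 2 ≤ x) (hy : 0 < y) :
    HasSum (fun k : ℕ => (x - 1) * betaFn x (y + k + 1)) (y * betaFn x y) := by
  have hterm : ∀ k : ℕ, (x - 1) * betaFn x (y + k + 1) =
      (y + k) * betaFn x (y + k) - (y + (k + 1 : ℕ)) * betaFn x (y + (k + 1 : ℕ)) := fun k => by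
    rw [Nat.cast_succ, ← add_assoc,
      mul_betaFn_sub_mul_betaFn_add_one (by positivity) (by positivity)]
  rw [hasSum_iff_tendsto_nat_of_nonneg fun k =>
    (mul_pos (by linarith) (betaFn_pos (by linarith) (by positivity))).le]
  simp only [hterm, sum_range_sub' (fun k : ℕ => (y + k) * betaFn x (y + k))]
  simpa using tendsto_const_nhds.sub (tendsto_mul_betaFn_add_nat hx hy)

/-- For every `p ∈ (0,1)` and `j ≥ 1`:
`(1/p − 1) Σ_{k=j}^∞ B(1+1/p, k+1) (1/j) = (1−p) B(1+1/p, j)`. -/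
theorem tsum_beta_tail_eq (p : ℝ) (hp : p ∈ Set.Ioo (0 : ℝ) 1) (j : ℕ) (hj : 1 ≤ j) :
    (1 / p - 1) * ∑' k : ℕ, betaFn (1 + 1 / p) ((j + k : ℕ) + 1) * (1 / (j : ℝ)) =
      (1 - p) * betaFn (1 + 1 / p) j := by
  obtain ⟨hp0, hp1⟩ := hp
  have ha : 2 ≤ 1 + 1 / p := by linarith [one_lt_one_div hp0 hp1]
  have hj0 : (0 : ℝ) < j := by exact_mod_cast hj
  have hsum := (hasSum_betaFn_add_nat ha hj0).tsum_eq
  rw [tsum_mul_left, add_sub_cancel_left] at hsum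
  push_cast
  rw [tsum_mul_right]
  field_simp at hsum ⊢
  linear_combination hsum
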